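/- arXiv:1207.6603 — 5 statements merged into one kernel-verified Lean document; each statement's English description precedes it below -/
import Mathlib

section
/- Let n ≥ 1 and let c : Fin n → ℝ be nondecreasing (c j ≤ c k whenever j ≤ k). Let m, n' : Fin n → ℝ be strictly positive with ∑ j, m j = 1 and ∑ j, n' j = 1. If for every j with j+1 < n one has m j / m (j+1) ≤ n' j / n' (j+1), then ∑ j, c j * n' j ≤ ∑ j, c j * m j. -/
/-!
Put `r j := n' j / m j`, so that `n' j = m j * r j`. The likelihood-ratio condition says exactly
that `r` is antitone, while `c` is monotone, so `c` and `r` antivary. Chebyshev's sum inequality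
weighted by the probability vector `m` then gives `∑ m c r ≤ (∑ m c) (∑ m r)`, i.e.
`∑ c n' ≤ (∑ c m) · 1`.
-/

open Finset

theorem AntivaryOn.card_mul_sum_le_sum_mul_sum_weighted {ι α : Type*} [CommRing α]
    [LinearOrder α] [IsStrictOrderedRing α] {s : Finset ι} {w f g : ι → α}
    (hw : ∀ i ∈ s, 0 ≤ w i) (hfg : AntivaryOn f g s) :
    (∑ i ∈ s, w i) * ∑ i ∈ s, w i * (f i * g i) ≤
      (∑ i ∈ s, w i * f i) * ∑ i ∈ s, w i * g i := by
  -- Summing the rows of the nonpositive double sum gives twice (left side - right side).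
  have row_sum (i : ι) : ∑ j ∈ s, w i * w j * ((f j - f i) * (g j - g i)) =
      w i * ∑ j ∈ s, w j * (f j * g j) - w i * g i * ∑ j ∈ s, w j * f j
        - w i * f i * ∑ j ∈ s, w j * g j + w i * (f i * g i) * ∑ j ∈ s, w j := by
    simp only [mul_sum, ← sum_sub_distrib, ← sum_add_distrib]
    exact sum_congr rfl fun j _ ↦ by ring
  have double_sum_nonpos :
      ∑ i ∈ s, ∑ j ∈ s, w i * w j * ((f j - f i) * (g j - g i)) ≤ 0 :=
    sum_nonpos fun i hi ↦ sum_nonpos fun j hj ↦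
      mul_nonpos_of_nonneg_of_nonpos (mul_nonneg (hw i hi) (hw j hj))
        (hfg.sub_mul_sub_nonpos hi hj)
  simp only [row_sum, sum_add_distrib, sum_sub_distrib, ← sum_mul] at double_sum_nonpos
  linarith

theorem Fin.antitone_of_forall_succ_le {α : Type*} [Preorder α] {n : ℕ} {f : Fin n → α}
    (hf : ∀ (j : Fin n) (h : (j : ℕ) + 1 < n), f ⟨j + 1, h⟩ ≤ f j) : Antitone f := by
  cases n with
  | zero => exact fun i ↦ i.elim0
  | succ n => exact Fin.antitone_iff_succ_le.2 fun i ↦ hf i.castSucc (by simp)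

theorem reservation_price_lemma_general (n : ℕ)
    (c m n' : Fin n → ℝ)
    (hc : ∀ j k : Fin n, j ≤ k → c j ≤ c k)
    (hm_pos : ∀ j, 0 < m j) (hn'_pos : ∀ j, 0 < n' j)
    (hm_sum : ∑ j, m j = 1) (hn'_sum : ∑ j, n' j = 1)
    (hratio : ∀ j : Fin n, ∀ h : (j : ℕ) + 1 < n,
      m j / m ⟨(j : ℕ) + 1, h⟩ ≤ n' j / n' ⟨(j : ℕ) + 1, h⟩) :
    ∑ j, c j * n' j ≤ ∑ j, c j * m j := by
  set r : Fin n → ℝ := fun j ↦ n' j / m j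
  have hn' (j : Fin n) : m j * r j = n' j := mul_div_cancel₀ _ (hm_pos j).ne'
  have hr : Antitone r := Fin.antitone_of_forall_succ_le fun j h ↦ by
    have := hratio j h
    rw [div_le_div_iff₀ (hm_pos _) (hn'_pos _)] at this
    rw [div_le_div_iff₀ (hm_pos _) (hm_pos _)]
    linarith
  have chebyshev := AntivaryOn.card_mul_sum_le_sum_mul_sum_weighted (s := univ)
    (fun j _ ↦ (hm_pos j).le) ((Monotone.antivary hc hr).antivaryOn _)
  simpa only [hn', hm_sum, hn'_sum, one_mul, mul_one, mul_left_comm (m _), mul_comm (m _)]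
    using chebyshev

/-- Reservation-price lemma (Section V-B): if channels are sorted by nondecreasing
per-service cost `c`, `m` and `n'` are strictly positive probability vectors, and the
consecutive likelihood-ratio condition `m j / m (j+1) ≤ n' j / n' (j+1)` holds, then
the estimated average cost `∑ c j * m j` dominates the true average cost `∑ c j * n' j`. -/
theorem reservation_price_lemma (n : ℕ) (hn : 1 ≤ n)
    (c m n' : Fin n → ℝ)
    (hc : ∀ j k : Fin n, j ≤ k → c j ≤ c k)
    (hm_pos : ∀ j, 0 < m j) (hn'_pos : ∀ j, 0 < n' j)
    (hm_sum : ∑ j, m j = 1) (hn'_sum : ∑ j, n' j = 1)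
    (hratio : ∀ j : Fin n, ∀ h : (j : ℕ) + 1 < n,
      m j / m ⟨(j : ℕ) + 1, h⟩ ≤ n' j / n' ⟨(j : ℕ) + 1, h⟩) :
    ∑ j, c j * n' j ≤ ∑ j, c j * m j :=
  reservation_price_lemma_general n c m n' hc hm_pos hn'_pos hm_sum hn'_sum hratio
end

section
/- Let α be a type, A B : Finset α, and w : α → ℝ with w x ≥ 0 for every x ∈ A ∪ B. Suppose there exists an injective map φ from the elements of A \ B into the elements of B such that w a ≤ w (φ a) for every a ∈ A \ B. Then ∑_{a ∈ A} w a ≤ 2 · ∑_{b ∈ B} w b. -/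
/-!
Split `A` into `A ∩ B` and `A \ B`. The first part weighs at most `B` since it is a subset of
`B` and weights on `B` are nonnegative; the second part is dominated, term by term, by its
injective image under `φ`, which again is a subset of `B`.
-/

open Finset

theorem Finset.sum_le_sum_of_injOn {ι κ M : Type*} [AddCommMonoid M] [PartialOrder M]
    [IsOrderedAddMonoid M] {s : Finset ι} {t : Finset κ} {f : ι → M} {g : κ → M} (e : ι → κ)
    (he : Set.InjOn e s) (hest : Set.MapsTo e s t) (hg : ∀ j ∈ t, 0 ≤ g j)
    (hfg : ∀ i ∈ s, f i ≤ g (e i)) :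
    ∑ i ∈ s, f i ≤ ∑ j ∈ t, g j := by
  classical
  calc ∑ i ∈ s, f i ≤ ∑ i ∈ s, g (e i) := sum_le_sum hfg
    _ = ∑ j ∈ s.image e, g j := (sum_image he).symm
    _ ≤ ∑ j ∈ t, g j :=
      sum_le_sum_of_subset_of_nonneg (image_subset_iff.2 hest) fun j hj _ ↦ hg j hj

/-- Charging argument in Proposition 3: if every element of `A \ B` can be injectively
charged to an element of `B` of at least equal (nonnegative) weight, then the total
weight of `A` is at most twice that of `B`. -/
theorem charging_argument {α : Type*} [DecidableEq α]
    (A B : Finset α) (w : α → ℝ)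
    (hw : ∀ x ∈ A ∪ B, 0 ≤ w x)
    (φ : α → α)
    (hmap : ∀ a ∈ A \ B, φ a ∈ B)
    (hinj : ∀ a ∈ A \ B, ∀ a' ∈ A \ B, φ a = φ a' → a = a')
    (hle : ∀ a ∈ A \ B, w a ≤ w (φ a)) :
    ∑ a ∈ A, w a ≤ 2 * ∑ b ∈ B, w b := by
  have hwB : ∀ b ∈ B, 0 ≤ w b := fun b hb ↦ hw b (mem_union_right A hb)
  have hinter : ∑ a ∈ A ∩ B, w a ≤ ∑ b ∈ B, w b :=
    sum_le_sum_of_subset_of_nonneg inter_subset_right fun b hb _ ↦ hwB b hb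
  have hdiff : ∑ a ∈ A \ B, w a ≤ ∑ b ∈ B, w b :=
    sum_le_sum_of_injOn φ (fun a ha a' ha' ↦ hinj a ha a' ha') hmap hwB hle
  rw [← sum_inter_add_sum_sdiff A B w]
  linarith
end

section
/- Consider a finite set R of requests with arrival times a : R → ℕ, deadlines d : R → ℕ satisfying a i ≤ d i, nonnegative valuations w : R → ℝ, and per-slot channel capacities c : ℕ → ℕ. Call σ : R → Option ℕ a feasible schedule if (i) σ i = some t implies a i ≤ t ≤ d i, and (ii) for every slot t, the number of requests i with σ i = some t is at most c t. Call a feasible schedule g greedy if for every request i with g i = none and every slot t with a i ≤ t ≤ d i, the number of requests j with g j = some t equals c t and every such j satisfies w j ≥ w i. Then for any feasible schedule σ and any greedy schedule g, ∑_{i : σ i ≠ none} w i ≤ 2 · ∑_{j : g j ≠ none} w j. -/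
/-!
Split the requests served by `σ` into those that greedy also serves, worth at most greedy's total,
and those that greedy drops. A dropped request that `σ` puts in slot `t` lies in its window, so
greedy filled all `c t` channels of `t` with requests worth at least as much; since `σ` uses at
most `c t` channels of `t`, the dropped requests it serves there are worth at most what greedy
earns in `t`. Summing over slots bounds the second part by greedy's total as well.
-/

open Finset

theorem Finset.sum_le_sum_of_card_le_of_forall_le {ι M : Type*} [AddCommMonoid M] [LinearOrder M]
    [IsOrderedAddMonoid M] {s t : Finset ι} {f : ι → M} (hcard : #s ≤ #t)
    (hle : ∀ i ∈ s, ∀ j ∈ t, f i ≤ f j) (hnonneg : ∀ j ∈ t, 0 ≤ f j) :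
    ∑ i ∈ s, f i ≤ ∑ j ∈ t, f j := by
  obtain rfl | hs := s.eq_empty_or_nonempty
  · simpa using sum_nonneg hnonneg
  obtain ⟨m, hm, hmin⟩ := t.exists_min_image f (card_pos.mp ((card_pos.mpr hs).trans_le hcard))
  calc ∑ i ∈ s, f i ≤ #s • f m := sum_le_card_nsmul s f (f m) fun i hi => hle i hi m hm
    _ ≤ #t • f m := nsmul_le_nsmul_left (hnonneg m hm) hcard
    _ ≤ ∑ j ∈ t, f j := card_nsmul_le_sum t f (f m) hmin

section Greedy

variable {R : Type*} [Fintype R] {a d : R → ℕ} {w : R → ℝ} {c : ℕ → ℕ} {σ g : R → Option ℕ}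

theorem sum_dropped_in_slot_le (hw : ∀ i, 0 ≤ w i)
    (hσ_win : ∀ i t, σ i = some t → a i ≤ t ∧ t ≤ d i)
    (hσ_cap : ∀ t, #{i | σ i = some t} ≤ c t)
    (hg_greedy : ∀ i, g i = none → ∀ t, a i ≤ t → t ≤ d i →
      #{j | g j = some t} = c t ∧ ∀ j, g j = some t → w i ≤ w j) (t : ℕ) :
    ∑ i with g i = none ∧ σ i = some t, w i ≤ ∑ j with g j = some t, w j := by
  have greedy_at {i} (hi : g i = none ∧ σ i = some t) :=
    hg_greedy i hi.1 t (hσ_win i t hi.2).1 (hσ_win i t hi.2).2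
  refine sum_le_sum_of_card_le_of_forall_le ?_
    (fun i hi j hj => (greedy_at (mem_filter.mp hi).2).2 j (mem_filter.mp hj).2) fun j _ => hw j
  obtain hempty | ⟨i, hi⟩ := ({i | g i = none ∧ σ i = some t} : Finset R).eq_empty_or_nonempty
  · simp [hempty]
  calc #({i | g i = none ∧ σ i = some t} : Finset R)
      ≤ #{i | σ i = some t} := card_le_card fun i => by simp
    _ ≤ c t := hσ_cap t
    _ = #{j | g j = some t} := (greedy_at (mem_filter.mp hi).2).1.symm

theorem sum_served_dropped_le (hw : ∀ i, 0 ≤ w i)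
    (hσ_win : ∀ i t, σ i = some t → a i ≤ t ∧ t ≤ d i)
    (hσ_cap : ∀ t, #{i | σ i = some t} ≤ c t)
    (hg_greedy : ∀ i, g i = none → ∀ t, a i ≤ t → t ≤ d i →
      #{j | g j = some t} = c t ∧ ∀ j, g j = some t → w i ≤ w j) :
    ∑ i with σ i ≠ none ∧ g i = none, w i ≤ ∑ j with g j ≠ none, w j := by
  set slots := (univ.image σ).erase none
  calc ∑ i with σ i ≠ none ∧ g i = none, w i
      = ∑ i ∈ {i | g i = none} with σ i ∈ slots, w i := by
        rw [filter_filter]; congr 1; ext i; simp [slots, and_comm]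
    _ = ∑ o ∈ slots, ∑ i ∈ {i | g i = none} with σ i = o, w i :=
        (sum_fiberwise_eq_sum_filter _ _ _ _).symm
    _ ≤ ∑ o ∈ slots, ∑ j with g j = o, w j := sum_le_sum fun o ho => by
        obtain ⟨t, rfl⟩ := Option.ne_none_iff_exists'.mp (ne_of_mem_erase ho)
        rw [filter_filter]
        exact sum_dropped_in_slot_le hw hσ_win hσ_cap hg_greedy t
    _ = ∑ j with g j ∈ slots, w j := sum_fiberwise_eq_sum_filter _ _ _ _
    _ ≤ ∑ j with g j ≠ none, w j :=
        sum_le_sum_of_subset_of_nonneg (monotone_filter_right _ fun _ _ => ne_of_mem_erase)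
          fun j _ _ => hw j

end Greedy

theorem greedy_half_competitive_general {R : Type*} [Fintype R]
    (a d : R → ℕ)
    (w : R → ℝ) (hw : ∀ i, 0 ≤ w i)
    (c : ℕ → ℕ) (σ g : R → Option ℕ)
    -- σ is feasible
    (hσ_win : ∀ i t, σ i = some t → a i ≤ t ∧ t ≤ d i)
    (hσ_cap : ∀ t, (Finset.univ.filter (fun i => σ i = some t)).card ≤ c t)
    -- g is greedy
    (hg_greedy : ∀ i, g i = none → ∀ t, a i ≤ t → t ≤ d i →
      (Finset.univ.filter (fun j => g j = some t)).card = c t ∧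
      ∀ j, g j = some t → w i ≤ w j) :
    ∑ i ∈ Finset.univ.filter (fun i => σ i ≠ none), w i ≤
      2 * ∑ j ∈ Finset.univ.filter (fun j => g j ≠ none), w j := by
  have served_by_both : ∑ i with σ i ≠ none ∧ g i ≠ none, w i ≤ ∑ j with g j ≠ none, w j :=
    sum_le_sum_of_subset_of_nonneg (monotone_filter_right _ fun _ _ h => h.2) fun j _ _ => hw j
  calc ∑ i with σ i ≠ none, w i
      = ∑ i with σ i ≠ none ∧ g i ≠ none, w i + ∑ i with σ i ≠ none ∧ g i = none, w i := by
        rw [← sum_filter_add_sum_filter_not _ fun i => g i ≠ none]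
        simp only [filter_filter, not_not]
    _ ≤ ∑ j with g j ≠ none, w j + ∑ j with g j ≠ none, w j :=
        add_le_add served_by_both (sum_served_dropped_le hw hσ_win hσ_cap hg_greedy)
    _ = 2 * ∑ j with g j ≠ none, w j := (two_mul _).symm

/-- Deterministic sample-path version of Proposition 3 (1/2-competitiveness of greedy):
any feasible schedule obtains at most twice the total valuation of a greedy schedule. -/
theorem greedy_half_competitive {R : Type*} [Fintype R] [DecidableEq R]
    (a d : R → ℕ) (had : ∀ i, a i ≤ d i)
    (w : R → ℝ) (hw : ∀ i, 0 ≤ w i)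
    (c : ℕ → ℕ) (σ g : R → Option ℕ)
    -- σ is feasible
    (hσ_win : ∀ i t, σ i = some t → a i ≤ t ∧ t ≤ d i)
    (hσ_cap : ∀ t, (Finset.univ.filter (fun i => σ i = some t)).card ≤ c t)
    -- g is feasible
    (hg_win : ∀ i t, g i = some t → a i ≤ t ∧ t ≤ d i)
    (hg_cap : ∀ t, (Finset.univ.filter (fun i => g i = some t)).card ≤ c t)
    -- g is greedy
    (hg_greedy : ∀ i, g i = none → ∀ t, a i ≤ t → t ≤ d i →
      (Finset.univ.filter (fun j => g j = some t)).card = c t ∧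
      ∀ j, g j = some t → w i ≤ w j) :
    ∑ i ∈ Finset.univ.filter (fun i => σ i ≠ none), w i ≤
      2 * ∑ j ∈ Finset.univ.filter (fun j => g j ≠ none), w j :=
  greedy_half_competitive_general a d w hw c σ g hσ_win hσ_cap hg_greedy
end

section
/- Let p, p̂, Q, w be real numbers with 0 < p ≤ 1, 0 ≤ p̂ ≤ 1, Q ≥ 0, and w·p ≥ Q·(1−p). Define F : ℕ → ℝ by F 0 = 0 and F (n+1) = (1−p̂)·F n + p̂·max (w·p + (1−p)·(F n − Q)) (F n). Then for every n, p · F n ≤ w·p − Q·(1−p). -/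
/-! Write `B = w·p − Q·(1−p)`. Scheduling turns a bound `p·x ≤ B` into
`p·(w·p + (1−p)·(x − Q)) = p·B + (1−p)·(p·x) ≤ p·B + (1−p)·B = B` since `1 − p ≥ 0`,
and deferring keeps `p·x`; so both branches of the `max`, and hence the averaged update,
stay below `B`. The base case is `B ≥ 0`. -/

lemma combo_le_of_le {t x y B : ℝ} (ht0 : 0 ≤ t) (ht1 : t ≤ 1) (hx : x ≤ B) (hy : y ≤ B) :
    (1 - t) * x + t * y ≤ B := by
  simpa using convex_Iic B hx hy (sub_nonneg.2 ht1) ht0 (by ring)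

section

variable {p Q w x : ℝ}

lemma mul_schedule_value_le (hp1 : p ≤ 1) (hx : p * x ≤ w * p - Q * (1 - p)) :
    p * (w * p + (1 - p) * (x - Q)) ≤ w * p - Q * (1 - p) :=
  calc p * (w * p + (1 - p) * (x - Q))
      = p * (w * p - Q * (1 - p)) + (1 - p) * (p * x) := by ring
    _ ≤ p * (w * p - Q * (1 - p)) + (1 - p) * (w * p - Q * (1 - p)) := by
      gcongr
    _ = w * p - Q * (1 - p) := by ring

lemma mul_max_schedule_defer_le (hp1 : p ≤ 1) (hx : p * x ≤ w * p - Q * (1 - p)) :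
    p * max (w * p + (1 - p) * (x - Q)) x ≤ w * p - Q * (1 - p) := by
  rcases max_choice (w * p + (1 - p) * (x - Q)) x with h | h <;> rw [h]
  · exact mul_schedule_value_le hp1 hx
  · exact hx

end

theorem single_request_value_bound_general
    (p phat Q w : ℝ)
    (hp1 : p ≤ 1)
    (hphat0 : 0 ≤ phat) (hphat1 : phat ≤ 1)
    (hwp : Q * (1 - p) ≤ w * p)
    (F : ℕ → ℝ) (hF0 : F 0 = 0)
    (hFrec : ∀ n, F (n + 1) =
      (1 - phat) * F n + phat * max (w * p + (1 - p) * (F n - Q)) (F n)) :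
    ∀ n, p * F n ≤ w * p - Q * (1 - p) := by
  intro n
  induction n with
  | zero => rw [hF0, mul_zero]; linarith
  | succ n ih =>
    calc p * F (n + 1)
        = (1 - phat) * (p * F n)
          + phat * (p * max (w * p + (1 - p) * (F n - Q)) (F n)) := by rw [hFrec n]; ring
      _ ≤ w * p - Q * (1 - p) :=
        combo_le_of_le hphat0 hphat1 ih (mul_max_schedule_defer_le hp1 ih)

/-- Induction claim inside Proposition 2: for the single-request value function `F`,
`p · F n ≤ w·p − Q·(1−p)` holds for every horizon `n`. -/
theorem single_request_value_bound
    (p phat Q w : ℝ)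
    (hp : 0 < p) (hp1 : p ≤ 1)
    (hphat0 : 0 ≤ phat) (hphat1 : phat ≤ 1)
    (hQ : 0 ≤ Q) (hwp : Q * (1 - p) ≤ w * p)
    (F : ℕ → ℝ) (hF0 : F 0 = 0)
    (hFrec : ∀ n, F (n + 1) =
      (1 - phat) * F n + phat * max (w * p + (1 - p) * (F n - Q)) (F n)) :
    ∀ n, p * F n ≤ w * p - Q * (1 - p) :=
  single_request_value_bound_general p phat Q w hp1 hphat0 hphat1 hwp F hF0 hFrec
end

section
/- Let p, p̂, Q, w be real numbers with 0 < p ≤ 1, 0 ≤ p̂ ≤ 1, Q ≥ 0, and w·p ≥ Q·(1−p). Define F : ℕ → ℝ by F 0 = 0 and F (n+1) = (1−p̂)·F n + p̂·max (w·p + (1−p)·(F n − Q)) (F n). Then for every n, F n ≤ w·p + (1−p)·(F n − Q); that is, the scheduling branch always achieves the maximum in the recursion. -/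
/-!
Write `c = w p - (1 - p) Q`, so that the scheduling value at `x` is `c + (1 - p) x` and it beats
deferring exactly when `p x ≤ c`. While this holds, one step of the recursion multiplies the slack
`c - p x` by `1 - p p̂ ∈ [0, 1]`; starting from the slack `c ≥ 0` at `F 0 = 0`, it never turns negative.
-/

lemma max_schedule_eq {c p x : ℝ} (hx : p * x ≤ c) :
    max (c + (1 - p) * x) x = c + (1 - p) * x :=
  max_eq_left (by linarith)

lemma slack_step {c p q x : ℝ} (hx : p * x ≤ c) :
    c - p * ((1 - q) * x + q * max (c + (1 - p) * x) x) = (1 - p * q) * (c - p * x) := by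
  rw [max_schedule_eq hx]
  ring

lemma slack_step_nonneg {c p q x : ℝ} (hx : p * x ≤ c) (hpq : p * q ≤ 1) :
    p * ((1 - q) * x + q * max (c + (1 - p) * x) x) ≤ c :=
  sub_nonneg.1 <| slack_step hx ▸ mul_nonneg (sub_nonneg.2 hpq) (sub_nonneg.2 hx)

theorem schedule_branch_optimal_general
    (p phat Q w : ℝ)
    (hp1 : p ≤ 1)
    (hphat0 : 0 ≤ phat) (hphat1 : phat ≤ 1)
    (hwp : Q * (1 - p) ≤ w * p)
    (F : ℕ → ℝ) (hF0 : F 0 = 0)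
    (hFrec : ∀ n, F (n + 1) =
      (1 - phat) * F n + phat * max (w * p + (1 - p) * (F n - Q)) (F n)) :
    ∀ n, F n ≤ w * p + (1 - p) * (F n - Q) := by
  set c := w * p - (1 - p) * Q
  have hschedule : ∀ x, w * p + (1 - p) * (x - Q) = c + (1 - p) * x := fun x => by ring
  have hpphat : p * phat ≤ 1 := (mul_le_of_le_one_left hphat0 hp1).trans hphat1
  have hslack : ∀ n, p * F n ≤ c := by
    intro n
    induction n with
    | zero => rw [hF0, mul_zero]; linarith
    | succ n ih => rw [hFrec n, hschedule]; exact slack_step_nonneg ih hpphat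
  intro n
  rw [hschedule]
  linarith [hslack n]

/-- 'Schedule whenever possible' conclusion of Proposition 2: the scheduling branch
always achieves the maximum in the recursion for `F`. -/
theorem schedule_branch_optimal
    (p phat Q w : ℝ)
    (hp : 0 < p) (hp1 : p ≤ 1)
    (hphat0 : 0 ≤ phat) (hphat1 : phat ≤ 1)
    (hQ : 0 ≤ Q) (hwp : Q * (1 - p) ≤ w * p)
    (F : ℕ → ℝ) (hF0 : F 0 = 0)
    (hFrec : ∀ n, F (n + 1) =
      (1 - phat) * F n + phat * max (w * p + (1 - p) * (F n - Q)) (F n)) :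
    ∀ n, F n ≤ w * p + (1 - p) * (F n - Q) :=
  schedule_branch_optimal_general p phat Q w hp1 hphat0 hphat1 hwp F hF0 hFrec
end
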